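/- arXiv:2107.08295 — 2 statements merged into one kernel-verified Lean document; each statement's English description precedes it below -/
import Mathlib

section
/- Consider a finite-horizon Markov decision process with finite state space S, finite action space A, initial state s₀, transition kernel T : S → A → PMF S, reward function R : S → A → ℝ, and horizon n. Let π : S → PMF A be a policy, M a finite message set with prior μ : PMF M, and σ a message-conditional history-dependent policy such that for every partial history h = (s₀, a₀, …, s_t) with t < n and every action a, ∑_{m} μ(m) · P_σ(h | m) · σ(m, h)(a) = (∑_{m} μ(m) · P_σ(h | m)) · π(s_t)(a). Then the expected cumulative reward of the message-conditional policy, in expectation over messages, equals that of π: ∑_{m} μ(m) · ∑_{z} P_σ(z | m) · R(z) = ∑_{z} P_π(z) · R(z), where the sums over z range over all length-n trajectories and R(z) = ∑_{t=0}^{n-1} R(s_t, a_t). (This is Proposition 2 of the paper.) -/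
/-- `p` is a probability mass function on the finite type `α`. -/
def IsPMF {α : Type*} [Fintype α] (p : α → ℝ) : Prop :=
  (∀ a, 0 ≤ p a) ∧ ∑ a, p a = 1

/-- The prefix of a state sequence `s₀, …, s_t` up to time `i < t`. -/
def statePrefix {S : Type*} {t : ℕ} (s : Fin (t + 1) → S) (i : Fin t) :
    Fin (i.val + 1) → S :=
  fun j => s ⟨j.val, by have := j.isLt; have := i.isLt; omega⟩

/-- The prefix of an action sequence `a₀, …, a_{t-1}` up to (excluding) time `i < t`. -/
def actionPrefix {A : Type*} {t : ℕ} (a : Fin t → A) (i : Fin t) : Fin i.val → A :=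
  fun j => a ⟨j.val, by have := j.isLt; have := i.isLt; omega⟩

/-- A history-dependent action-selection rule: given the length `t` of the history, the
states `s₀, …, s_t` and the actions `a₀, …, a_{t-1}` so far, a distribution over actions. -/
def HistPolicy (S A : Type*) : Type _ :=
  ∀ t : ℕ, (Fin (t + 1) → S) → (Fin t → A) → A → ℝ

/-- Probability `P_ρ(h)` of a history/trajectory `h = (s₀, a₀, s₁, …, s_t)` when actions
are drawn from the history-dependent rule `ρ` and states transition according to `T`:
`P_ρ(h) = ∏_{i=0}^{t-1} ρ(h_i)(a_i) · T(s_i, a_i)(s_{i+1})`. -/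
def histProb {S A : Type*} [Fintype A] [Fintype S]
    (T : S → A → S → ℝ) (ρ : HistPolicy S A) {t : ℕ}
    (s : Fin (t + 1) → S) (a : Fin t → A) : ℝ :=
  ∏ i : Fin t,
    ρ i.val (statePrefix s i) (actionPrefix a i) (a i) * T (s i.castSucc) (a i) (s i.succ)

/-- The history-dependent rule induced by a Markov policy `π : S → Δ(A)`: it selects
actions depending only on the current (last) state. -/
def markovRule {S A : Type*} (π : S → A → ℝ) : HistPolicy S A :=
  fun t st _ => π (st (Fin.last t))

/-- Cumulative reward `R(z) = ∑_{t=0}^{n-1} R(s_t, a_t)` of a trajectory. -/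
def trajReward {S A : Type*} (R : S → A → ℝ) {n : ℕ}
    (s : Fin (n + 1) → S) (a : Fin n → A) : ℝ :=
  ∑ i : Fin n, R (s i.castSucc) (a i)

theorem mix_hist_eq
    {S A M : Type*} [Fintype S] [Fintype A] [Fintype M]
    (s₀ : S) (T : S → A → S → ℝ) (n : ℕ)
    (π : S → A → ℝ) (μ : M → ℝ) (σ : M → HistPolicy S A)
    (hμ : ∑ m, μ m = 1)
    (hmix : ∀ t : ℕ, t < n → ∀ (s : Fin (t + 1) → S) (a : Fin t → A), s 0 = s₀ →
      ∀ act : A,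
        ∑ m, μ m * histProb T (σ m) s a * σ m t s a act
          = (∑ m, μ m * histProb T (σ m) s a) * π (s (Fin.last t)) act) :
    ∀ t : ℕ, t ≤ n → ∀ (s : Fin (t + 1) → S) (a : Fin t → A), s 0 = s₀ →
      ∑ m, μ m * histProb T (σ m) s a = histProb T (markovRule π) s a := by
  intro t
  induction t with
  | zero =>
    intro _ s a _
    simp [histProb, hμ]
  | succ t ih =>
    intro ht s a h0
    have ht' : t < n := ht
    have htn : t ≤ n := le_of_lt ht'
    set sInit : Fin (t + 1) → S := fun j => s j.castSucc with hsI
    set aInit : Fin t → A := fun j => a j.castSucc with haI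
    have h0' : sInit 0 = s₀ := by
      show s ((0 : Fin (t + 1)).castSucc) = s₀
      simpa using h0
    have hsplit : ∀ ρ : HistPolicy S A, histProb T ρ s a =
        histProb T ρ sInit aInit *
          (ρ t sInit aInit (a (Fin.last t)) *
            T (s (Fin.last t).castSucc) (a (Fin.last t)) (s (Fin.last (t + 1)))) := by
      intro ρ
      unfold histProb
      rw [Fin.prod_univ_castSucc]
      congr 1
    calc ∑ m, μ m * histProb T (σ m) s a
        = (∑ m, μ m * histProb T (σ m) sInit aInit * σ m t sInit aInit (a (Fin.last t))) *
            T (s (Fin.last t).castSucc) (a (Fin.last t)) (s (Fin.last (t + 1))) := by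
          rw [Finset.sum_mul]
          exact Finset.sum_congr rfl fun m _ => by rw [hsplit (σ m)]; ring
      _ = ((∑ m, μ m * histProb T (σ m) sInit aInit) *
            π (sInit (Fin.last t)) (a (Fin.last t))) *
            T (s (Fin.last t).castSucc) (a (Fin.last t)) (s (Fin.last (t + 1))) := by
          rw [hmix t ht' sInit aInit h0' (a (Fin.last t))]
      _ = histProb T (markovRule π) s a := by
          rw [ih htn sInit aInit h0', hsplit (markovRule π)]
          simp only [markovRule]
          ring


/-- **Proposition 2.** If, at every partial history reachable from `s₀` of length
`t < n`, the mixture over messages of the message-conditional policy `σ` matches the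
Markov policy `π` at the current state, then the expected cumulative reward of the
message-conditional policy, in expectation over messages, equals that of `π`:
`∑_m μ(m) · ∑_z P_σ(z|m) · R(z) = ∑_z P_π(z) · R(z)`, where `z` ranges over all
length-`n` trajectories starting at `s₀`. -/
theorem expected_return_eq_of_mixture_matches_policy
    {S A M : Type*} [Fintype S] [Fintype A] [Fintype M] [DecidableEq S]
    [Nonempty S] [Nonempty A] [Nonempty M]
    (s₀ : S) (T : S → A → S → ℝ) (R : S → A → ℝ) (n : ℕ)
    (π : S → A → ℝ) (μ : M → ℝ) (σ : M → HistPolicy S A)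
    (hT : ∀ s a, IsPMF (T s a)) (hπ : ∀ s, IsPMF (π s)) (hμ : IsPMF μ)
    (hσ : ∀ m t st ac, IsPMF (σ m t st ac))
    (hmix : ∀ t : ℕ, t < n → ∀ (s : Fin (t + 1) → S) (a : Fin t → A), s 0 = s₀ →
      ∀ act : A,
        ∑ m, μ m * histProb T (σ m) s a * σ m t s a act
          = (∑ m, μ m * histProb T (σ m) s a) * π (s (Fin.last t)) act) :
    ∑ m, μ m *
        ∑ s : Fin (n + 1) → S, ∑ a : Fin n → A,
          (if s 0 = s₀ then histProb T (σ m) s a * trajReward R s a else 0)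
      = ∑ s : Fin (n + 1) → S, ∑ a : Fin n → A,
          (if s 0 = s₀ then histProb T (markovRule π) s a * trajReward R s a else 0) := by
  have key := mix_hist_eq s₀ T n π μ σ hμ.2 hmix n le_rfl
  have lhs_eq : ∀ (s : Fin (n + 1) → S) (a : Fin n → A),
      ∑ m, μ m * (if s 0 = s₀ then histProb T (σ m) s a * trajReward R s a else 0)
        = (if s 0 = s₀ then histProb T (markovRule π) s a * trajReward R s a else 0) := by
    intro s a
    by_cases h : s 0 = s₀
    · simp only [h, if_true]
      rw [← key s a h, Finset.sum_mul]
      exact Finset.sum_congr rfl fun m _ => by ring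
    · simp [h]
  calc ∑ m, μ m *
        ∑ s : Fin (n + 1) → S, ∑ a : Fin n → A,
          (if s 0 = s₀ then histProb T (σ m) s a * trajReward R s a else 0)
      = ∑ s : Fin (n + 1) → S, ∑ a : Fin n → A, ∑ m, μ m *
          (if s 0 = s₀ then histProb T (σ m) s a * trajReward R s a else 0) := by
        simp only [Finset.mul_sum]
        rw [Finset.sum_comm]
        exact Finset.sum_congr rfl fun s _ => Finset.sum_comm
    _ = _ := Finset.sum_congr rfl fun s _ => Finset.sum_congr rfl fun a _ => lhs_eq s a
end

section
/- Let M, A, S be finite nonempty types, b a probability mass function on M, p a probability mass function on A, and T : A → PMF S a Markov kernel. For a coupling ν of b and p, define the joint distribution λ_ν on M × A × S by λ_ν(m, a, s) = ν(m, a) · T(a)(s). Then for every coupling ν of b and p, I_{λ_ν}(M; (A, S)) = H(b) + H(p) − H(ν). In particular, if ν* is a minimum entropy coupling of b and p, then ν* maximizes the mutual information between the message M and the action–next-state pair (A, S): I_{λ_{ν*}}(M; (A, S)) ≥ I_{λ_ν}(M; (A, S)) for every coupling ν of b and p. (This is Proposition 3 of the paper: subject to the constraint that actions are selected with the marginal probabilities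 p, performing a minimum entropy coupling of the belief b over messages with the action distribution p greedily maximizes the mutual information between the message and the history at the next time step.) -/
/-- Shannon entropy of a (finitely supported) distribution, with the convention
`0 * log 0 = 0` (automatic since `Real.log 0 = 0`). -/
noncomputable def entropy {α : Type*} [Fintype α] (p : α → ℝ) : ℝ :=
  -∑ a, p a * Real.log (p a)

/-- First marginal of a joint distribution on a product. -/
noncomputable def margFst {X Y : Type*} [Fintype Y] (q : X × Y → ℝ) : X → ℝ :=
  fun x => ∑ y, q (x, y)

/-- Second marginal of a joint distribution on a product. -/
noncomputable def margSnd {X Y : Type*} [Fintype X] (q : X × Y → ℝ) : Y → ℝ :=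
  fun y => ∑ x, q (x, y)

/-- Mutual information of a joint distribution on a product:
`I(X;Y) = H(q_X) + H(q_Y) - H(q)`. -/
noncomputable def mutualInfo {X Y : Type*} [Fintype X] [Fintype Y] (q : X × Y → ℝ) : ℝ :=
  entropy (margFst q) + entropy (margSnd q) - entropy q

/-- `ν` is a coupling of `b` and `p`: a joint pmf on `M × A` whose first marginal is `b`
and whose second marginal is `p`. -/
def IsCoupling {M A : Type*} [Fintype M] [Fintype A]
    (b : M → ℝ) (p : A → ℝ) (ν : M × A → ℝ) : Prop :=
  IsPMF ν ∧ (∀ m, ∑ a, ν (m, a) = b m) ∧ (∀ a, ∑ m, ν (m, a) = p a)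

/-- The joint distribution on `M × (A × S)` induced by a joint distribution `ν` on
messages and actions together with a Markov kernel `T`: `λ_ν(m,a,s) = ν(m,a) · T(a)(s)`. -/
noncomputable def jointWithKernel {M A S : Type*}
    (ν : M × A → ℝ) (T : A → S → ℝ) : M × (A × S) → ℝ :=
  fun x => ν (x.1, x.2.1) * T x.2.1 x.2.2

lemma pmf_key_log (x y : ℝ) : x * y * Real.log (x * y)
    = y * (x * Real.log x) + x * (y * Real.log y) := by
  rcases eq_or_ne x 0 with hx | hx
  · simp [hx]
  rcases eq_or_ne y 0 with hy | hy
  · simp [hy]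
  rw [Real.log_mul hx hy]; ring

lemma pmf_inner_sum {S : Type*} [Fintype S] (c : ℝ) (t : S → ℝ) (ht : ∑ s, t s = 1) :
    ∑ s, c * t s * Real.log (c * t s)
      = c * Real.log c + c * (∑ s, t s * Real.log (t s)) := by
  rw [Finset.mul_sum]
  rw [show (∑ s, c * t s * Real.log (c * t s))
      = ∑ s, (t s * (c * Real.log c) + c * (t s * Real.log (t s)))
    from Finset.sum_congr rfl fun s _ => pmf_key_log _ _]
  rw [Finset.sum_add_distrib, ← Finset.sum_mul, ht, one_mul]

/-- **Proposition 3.** For every coupling `ν` of the belief `b` over messages with the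
action distribution `p`, the mutual information between the message and the
action–next-state pair under `λ_ν(m,a,s) = ν(m,a) · T(a)(s)` equals
`H(b) + H(p) - H(ν)`. Consequently, a minimum entropy coupling `ν*` of `b` and `p`
maximizes this mutual information over all couplings. -/
theorem minEntropyCoupling_greedily_maximizes_mutualInfo
    {M A S : Type*} [Fintype M] [Fintype A] [Fintype S]
    [Nonempty M] [Nonempty A] [Nonempty S]
    (b : M → ℝ) (p : A → ℝ) (T : A → S → ℝ)
    (hb : IsPMF b) (hp : IsPMF p) (hT : ∀ a, IsPMF (T a)) :
    (∀ ν : M × A → ℝ, IsCoupling b p ν →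
        mutualInfo (jointWithKernel ν T) = entropy b + entropy p - entropy ν) ∧
      ∀ νstar : M × A → ℝ, IsCoupling b p νstar →
        (∀ ν : M × A → ℝ, IsCoupling b p ν → entropy νstar ≤ entropy ν) →
        ∀ ν : M × A → ℝ, IsCoupling b p ν →
          mutualInfo (jointWithKernel νstar T) ≥ mutualInfo (jointWithKernel ν T) := by
  have hTsum : ∀ a, ∑ s, T a s = 1 := fun a => (hT a).2
  have main : ∀ ν : M × A → ℝ, IsCoupling b p ν →
      mutualInfo (jointWithKernel ν T) = entropy b + entropy p - entropy ν := by
    intro ν ⟨hpmf, hm1, hm2⟩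
    have hFst : margFst (jointWithKernel ν T) = b := by
      funext m
      simp only [margFst, jointWithKernel, Fintype.sum_prod_type]
      rw [← hm1 m]
      refine Finset.sum_congr rfl fun a _ => ?_
      rw [← Finset.mul_sum, hTsum a, mul_one]
    have hSnd : ∀ y : A × S, margSnd (jointWithKernel ν T) y = p y.1 * T y.1 y.2 := by
      intro y
      simp only [margSnd, jointWithKernel]
      rw [← Finset.sum_mul, hm2 y.1]
    set K : ℝ := ∑ a, p a * (∑ s, T a s * Real.log (T a s)) with hK
    have hHsnd : entropy (margSnd (jointWithKernel ν T)) = entropy p - K := by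
      simp only [entropy, Fintype.sum_prod_type, hSnd]
      rw [show (∑ a, ∑ s, p a * T a s * Real.log (p a * T a s))
          = ∑ a, (p a * Real.log (p a) + p a * (∑ s, T a s * Real.log (T a s)))
        from Finset.sum_congr rfl fun a _ => pmf_inner_sum _ _ (hTsum a)]
      rw [Finset.sum_add_distrib]
      ring
    have hHjoint : entropy (jointWithKernel ν T) = entropy ν - K := by
      simp only [entropy, jointWithKernel, Fintype.sum_prod_type]
      rw [show (∑ m, ∑ a, ∑ s, ν (m, a) * T a s * Real.log (ν (m, a) * T a s))
          = ∑ m, ∑ a, (ν (m, a) * Real.log (ν (m, a))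
              + ν (m, a) * (∑ s, T a s * Real.log (T a s)))
        from Finset.sum_congr rfl fun m _ =>
          Finset.sum_congr rfl fun a _ => pmf_inner_sum _ _ (hTsum a)]
      simp only [Finset.sum_add_distrib]
      rw [Finset.sum_comm (f := fun m a => ν (m, a) * (∑ s, T a s * Real.log (T a s)))]
      have : ∀ a, ∑ m, ν (m, a) * (∑ s, T a s * Real.log (T a s))
          = p a * (∑ s, T a s * Real.log (T a s)) := fun a => by
        rw [← Finset.sum_mul, hm2 a]
      simp only [this]
      ring
    rw [mutualInfo, hFst, hHsnd, hHjoint]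
    ring
  refine ⟨main, fun νstar hstar hmin ν hν => ?_⟩
  rw [main νstar hstar, main ν hν]
  have := hmin ν hν
  linarith
end
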